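/- Let π = a + b·i be a primary Gaussian prime of norm p (so p = a² + b² is prime, and π ≡ 1 mod 2+2i). Then the quartic residue symbol of 2 modulo π equals (-i)^{b/2}; in particular b is even. -/

import Mathlib

/-! Reduce modulo `π = a + b i`. As `p = a² + b²` is prime, `p ∤ b`, so `z = -a/b` is a square root
of `-1` in `𝔽_p` and `i ↦ z` defines a ring map `ℤ[i] → 𝔽_p` killing `π`. It is injective on fourth
roots of unity because `p` is odd, so it suffices to show `2^((p-1)/4) = (-z)^(b/2)` in `𝔽_p`.

From `2 = -z(1+z)²` and `(1+z)b = b - a` one gets `2^((p-1)/4) = z^((p-1)/4) · (b - a | p)` as soon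
as `(a | p) = 1`. Quadratic reciprocity settles both Legendre symbols: `p ≡ b² (mod a)` gives
`(a | p) = 1`, and `p ≡ 2a² (mod b - a)` gives `(b - a | p) = χ₈(b - a)`. What remains is a
congruence modulo 16 between `a`, `b` and `χ₈(b - a)`. -/

open ZMod (χ₈)

theorem eq_of_pow_eq_one_of_map_eq {R S : Type*} [CommRing R] [IsDomain R] [CommRing S]
    (f : R →+* S) {n : ℕ} (hn : (n : S) ≠ 0) {x y : R} (hx : x ^ n = 1) (hy : y ^ n = 1)
    (h : f x = f y) : x = y := by
  by_contra hne
  have hsum : ∑ i ∈ Finset.range n, x ^ i * y ^ (n - 1 - i) = 0 := by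
    have := geom_sum₂_mul x y n
    rw [hx, hy, sub_self] at this
    exact (mul_eq_zero.mp this).resolve_right (sub_ne_zero.mpr hne)
  have hsum' : (n : S) * f x ^ (n - 1) = 0 := by
    have := congrArg f hsum
    simp only [map_sum, map_mul, map_pow, map_zero, ← h] at this
    rwa [geom_sum₂_self] at this
  have hn0 : n ≠ 0 := by rintro rfl; simp at hn
  apply hn
  calc (n : S) = n * f x ^ n := by rw [← map_pow, hx, map_one, mul_one]
    _ = f x * (n * f x ^ (n - 1)) := by rw [← mul_pow_sub_one hn0 (f x)]; ring
    _ = 0 := by rw [hsum', mul_zero]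

theorem two_pow_eq_of_sq_eq_neg_one {R : Type*} [CommRing R] {z a b : R} {n : ℕ}
    (hz : z ^ 2 = -1) (hab : a + b * z = 0) (ha : a ^ (2 * n) = 1) :
    2 ^ n = z ^ n * (b - a) ^ (2 * n) := by
  have hb : b ^ (2 * n) = (-1) ^ n := by
    have : a ^ (2 * n) = b ^ (2 * n) * (-1) ^ n := by
      rw [eq_neg_of_add_eq_zero_left hab, pow_mul, pow_mul, neg_sq, mul_pow, hz, mul_pow]
    have hsq : ((-1 : R) ^ n) ^ 2 = 1 := by rw [← pow_mul, mul_comm, pow_mul, neg_one_sq, one_pow]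
    linear_combination (-b ^ (2 * n)) * hsq + (-1) ^ n * ha - (-1) ^ n * this
  calc (2 : R) ^ n = (-z * (1 + z) ^ 2) ^ n := by congr 1; linear_combination (z + 2) * hz
    _ = z ^ n * ((1 + z) * b) ^ (2 * n) := by
      rw [mul_pow (1 + z), hb, mul_pow, neg_pow z, ← pow_mul]; ring
    _ = z ^ n * (b - a) ^ (2 * n) := by congr 2; linear_combination hab

theorem pow_mul_neg_one_pow_eq_neg_pow {R : Type*} [CommRing R] {z : R} (hz : z ^ 2 = -1)
    {n j k : ℕ} (h : 3 * n + 2 * j ≡ k [MOD 4]) : z ^ n * (-1) ^ j = (-z) ^ k := by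
  have h3 : (-z) ^ 3 = z := by linear_combination (-z) * hz
  have h2 : (-z) ^ 2 = -1 := by rw [neg_sq, hz]
  have h4 : (-z) ^ 4 = 1 := by linear_combination (z ^ 2 - 1) * hz
  calc z ^ n * (-1) ^ j = ((-z) ^ 3) ^ n * ((-z) ^ 2) ^ j := by rw [h3, h2]
    _ = (-z) ^ (3 * n + 2 * j) := by rw [← pow_mul, ← pow_mul, pow_add]
    _ = (-z) ^ k := pow_eq_pow_of_modEq h h4

theorem Int.isCoprime_of_sq_add_sq_eq_prime {p : ℕ} (hp : p.Prime) {a b : ℤ}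
    (h : (p : ℤ) = a ^ 2 + b ^ 2) : IsCoprime a b := by
  rw [Int.isCoprime_iff_gcd_eq_one]
  have hd : (a.gcd b : ℤ) * a.gcd b ∣ p := by
    rw [h, sq, sq]
    exact dvd_add (mul_dvd_mul (Int.gcd_dvd_left a b) (Int.gcd_dvd_left a b))
      (mul_dvd_mul (Int.gcd_dvd_right a b) (Int.gcd_dvd_right a b))
  simpa [Int.isUnit_iff] using (Nat.prime_iff_prime_int.mp hp).squarefree _ hd

theorem ZMod.intCast_ne_zero_of_sq_add_sq_eq_prime {p : ℕ} (hp : p.Prime) {a b : ℤ}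
    (h : (p : ℤ) = a ^ 2 + b ^ 2) : (b : ZMod p) ≠ 0 := by
  rw [Ne, ZMod.intCast_zmod_eq_zero_iff_dvd]
  intro hb
  have hp' := Nat.prime_iff_prime_int.mp hp
  have ha : (p : ℤ) ∣ a := by
    obtain ⟨c, hc⟩ := hb
    exact hp'.dvd_of_dvd_pow (n := 2) ⟨1 - p * c ^ 2, by rw [hc] at h; linear_combination -h⟩
  exact hp'.not_isUnit ((Int.isCoprime_of_sq_add_sq_eq_prime hp h).isUnit_of_dvd' ha hb)

theorem ZMod.exists_sq_eq_neg_one_and_add_mul_eq_zero {p : ℕ} [Fact p.Prime] {a b : ℤ}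
    (h : (p : ℤ) = a ^ 2 + b ^ 2) : ∃ z : ZMod p, z ^ 2 = -1 ∧ a + b * z = 0 := by
  have hb := ZMod.intCast_ne_zero_of_sq_add_sq_eq_prime Fact.out h
  have hab : (a : ZMod p) ^ 2 + (b : ZMod p) ^ 2 = 0 := by exact_mod_cast (by rw [← h]; simp)
  refine ⟨-a / b, ?_, ?_⟩
  · field_simp
    linear_combination hab
  · field_simp
    ring

theorem Nat.mod_four_eq_one_of_sq_add_sq {p : ℕ} {a b : ℤ} (h : (p : ℤ) = a ^ 2 + b ^ 2)
    (ha : Odd a) (hb : Even b) : p % 4 = 1 := by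
  have := Int.sq_mod_four_eq_one_of_odd ha
  obtain ⟨t, rfl⟩ := hb
  have : (t + t) ^ 2 = 4 * t ^ 2 := by ring
  omega

theorem legendreSym_eq_jacobiSym_of_dvd_sub_mul_sq {p : ℕ} [Fact p.Prime] (hp : p % 4 = 1)
    {m c x : ℤ} (hm : Odd m) (hx : IsCoprime x m) (hdvd : m ∣ p - c * x ^ 2) :
    legendreSym p m = jacobiSym c m.natAbs := by
  have hm' : Odd m.natAbs := Int.natAbs_odd.mpr hm
  have habs : jacobiSym m p = jacobiSym m.natAbs p := by
    rcases Int.natAbs_eq m with h | h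
    · rw [← h]
    · rw [h, Int.natAbs_neg, Int.natAbs_natCast, jacobiSym.neg _ (Nat.odd_iff.mpr (by omega)),
        ZMod.χ₄_nat_one_mod_four hp, one_mul]
  have hmod : (p : ℤ) % m.natAbs = c * x ^ 2 % m.natAbs :=
    (Int.modEq_iff_dvd.mpr (Int.natAbs_dvd.mpr hdvd)).symm
  have hx' : x.gcd m.natAbs = 1 := (Int.isCoprime_iff_gcd_eq_one.mp hx :)
  rw [jacobiSym.legendreSym.to_jacobiSym, habs, jacobiSym.quadratic_reciprocity_one_mod_four' hm' hp,
    jacobiSym.mod_left' hmod, jacobiSym.mul_left, jacobiSym.sq_one' hx', mul_one]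

theorem ZMod.χ₈_natAbs (m : ℤ) : χ₈ m.natAbs = χ₈ m := by
  rw [χ₈_int_eq_if_mod_eight, χ₈_nat_eq_if_mod_eight]
  split_ifs <;> omega

/-- With `4 * n = a² + b² - 1`, the congruence reads `3 * n + 2 * j ≡ b / 2 [MOD 4]`. -/
theorem ZMod.exists_χ₈_sub_eq_neg_one_pow_and_modEq {a b : ℤ} (hb : Even b)
    (hab : (a + b) % 4 = 1) :
    ∃ j : ℕ, χ₈ (b - a) = (-1) ^ j ∧ 3 * (a ^ 2 + b ^ 2 - 1) + 8 * j ≡ 2 * b [ZMOD 16] := by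
  have key : ∀ x y : ZMod 16, 8 * y = 0 → 4 * (x + y) = 4 →
      (χ₈ (ZMod.castHom (by norm_num : 8 ∣ 16) (ZMod 8) (y - x)) = 1 ∧
        3 * (x ^ 2 + y ^ 2 - 1) = 2 * y) ∨
      (χ₈ (ZMod.castHom (by norm_num : 8 ∣ 16) (ZMod 8) (y - x)) = -1 ∧
        3 * (x ^ 2 + y ^ 2 - 1) + 8 = 2 * y) := by
    decide
  have hy : 8 * (b : ZMod 16) = 0 := by
    have := (ZMod.intCast_zmod_eq_zero_iff_dvd (8 * b) 16).mpr (by obtain ⟨t, rfl⟩ := hb; omega)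
    exact_mod_cast this
  have hxy : 4 * ((a : ZMod 16) + b) = 4 := by
    have := (ZMod.intCast_zmod_eq_zero_iff_dvd (4 * (a + b) - 4) 16).mpr (by omega)
    push_cast at this
    linear_combination this
  have hcast : (b : ZMod 8) - a =
      ZMod.castHom (by norm_num : 8 ∣ 16) (ZMod 8) ((b : ZMod 16) - a) := by
    rw [map_sub, map_intCast, map_intCast]
  rw [hcast]
  rcases key _ _ hy hxy with ⟨h1, h2⟩ | ⟨h1, h2⟩
  · refine ⟨0, h1, (ZMod.intCast_eq_intCast_iff _ _ 16).mp ?_⟩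
    push_cast
    linear_combination h2
  · refine ⟨1, h1, (ZMod.intCast_eq_intCast_iff _ _ 16).mp ?_⟩
    push_cast
    linear_combination h2

theorem two_pow_eq_neg_pow_of_sq_add_sq {p : ℕ} [Fact p.Prime] {a b : ℤ}
    (hpab : (p : ℤ) = a ^ 2 + b ^ 2) (hb : Even b) (hab : (a + b) % 4 = 1) {z : ZMod p}
    (hz : z ^ 2 = -1) (habz : a + b * z = 0) :
    (2 : ZMod p) ^ ((p - 1) / 4) = (-z) ^ (b / 2 % 4).toNat := by
  have ha : Odd a := Int.odd_iff.mpr (by obtain ⟨t, rfl⟩ := hb; omega)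
  have hp4 := Nat.mod_four_eq_one_of_sq_add_sq hpab ha hb
  have hcop := Int.isCoprime_of_sq_add_sq_eq_prime Fact.out hpab
  have hpn : p / 2 = 2 * ((p - 1) / 4) := by omega
  have ha_pow : (a : ZMod p) ^ (2 * ((p - 1) / 4)) = 1 := by
    rw [← hpn, ← legendreSym.eq_pow,
      legendreSym_eq_jacobiSym_of_dvd_sub_mul_sq hp4 (c := 1) ha hcop.symm
        ⟨a, by rw [hpab]; ring⟩, jacobiSym.one_left, Int.cast_one]
  obtain ⟨j, hχ₈, hj⟩ := ZMod.exists_χ₈_sub_eq_neg_one_pow_and_modEq hb hab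
  have hba_pow : ((b : ZMod p) - a) ^ (2 * ((p - 1) / 4)) = (-1) ^ j := by
    rw [← hpn, ← Int.cast_sub, ← legendreSym.eq_pow,
      legendreSym_eq_jacobiSym_of_dvd_sub_mul_sq hp4 (c := 2) (hb.sub_odd ha)
        (by simpa using (IsCoprime.sub_mul_right_right_iff (z := 1)).mpr hcop)
        ⟨b + a, by rw [hpab]; ring⟩,
      jacobiSym.at_two (Int.natAbs_odd.mpr (hb.sub_odd ha)), ZMod.χ₈_natAbs, Int.cast_sub, hχ₈]
    push_cast
    rfl
  rw [two_pow_eq_of_sq_eq_neg_one hz habz ha_pow, hba_pow]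
  apply pow_mul_neg_one_pow_eq_neg_pow hz
  unfold Nat.ModEq
  unfold Int.ModEq at hj
  omega

theorem GaussianInt.even_im_and_re_add_im_emod_four {π : GaussianInt}
    (h : (2 + 2 * ⟨0, 1⟩ : GaussianInt) ∣ π - 1) : Even π.im ∧ (π.re + π.im) % 4 = 1 := by
  obtain ⟨q, hq⟩ := h
  rw [show (2 + 2 * ⟨0, 1⟩ : GaussianInt) = ⟨2, 2⟩ by decide] at hq
  have hre := congrArg Zsqrtd.re hq
  have him := congrArg Zsqrtd.im hq
  simp only [Zsqrtd.re_sub, Zsqrtd.im_sub, Zsqrtd.re_one, Zsqrtd.im_one, Zsqrtd.re_mul,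
    Zsqrtd.im_mul] at hre him
  exact ⟨⟨q.re + q.im, by omega⟩, by omega⟩

/-- Let π = a + b·i be a primary Gaussian prime of prime norm p.  Then the quartic residue
symbol of 2 modulo π (the unique fourth root of unity χ with χ ≡ 2^((p-1)/4) mod π)
equals (-i)^{b/2}; in particular b is even.  Since (-i)^4 = 1, the power (-i)^{b/2} for
the integer b/2 is expressed via the representative (b/2) % 4 ∈ {0,1,2,3}. -/
theorem stmt_5 (π : GaussianInt) (p : ℕ) (hp : p.Prime)
    (hnorm : π.norm = (p : ℤ))
    (hprimary : (2 + 2 * ⟨0, 1⟩ : GaussianInt) ∣ (π - 1))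
    (χ : GaussianInt) (hχ4 : χ ^ 4 = 1)
    (hχ : π ∣ (χ - 2 ^ ((p - 1) / 4))) :
    Even π.im ∧ χ = (-(⟨0, 1⟩ : GaussianInt)) ^ ((π.im / 2) % 4).toNat := by
  have := Fact.mk hp
  obtain ⟨him, hre_im⟩ := GaussianInt.even_im_and_re_add_im_emod_four hprimary
  have hpπ : (p : ℤ) = π.re ^ 2 + π.im ^ 2 := by rw [← hnorm, Zsqrtd.norm_def]; ring
  obtain ⟨z, hz, hπz⟩ := ZMod.exists_sq_eq_neg_one_and_add_mul_eq_zero hpπ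
  let φ : GaussianInt →+* ZMod p := Zsqrtd.lift ⟨z, by push_cast; linear_combination hz⟩
  have hφi : φ ⟨0, 1⟩ = z := by simp [φ]
  have hφχ : φ χ = 2 ^ ((p - 1) / 4) := by
    have := map_dvd φ hχ
    rwa [show φ π = 0 from hπz, zero_dvd_iff, map_sub, sub_eq_zero, map_pow, map_ofNat] at this
  have h4 : ((4 : ℕ) : ZMod p) ≠ 0 := by
    have hp4 := Nat.mod_four_eq_one_of_sq_add_sq hpπ
      (Int.odd_iff.mpr (by obtain ⟨t, ht⟩ := him; omega)) him
    rw [Ne, ZMod.natCast_eq_zero_iff]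
    intro h
    have := Nat.le_of_dvd (by norm_num) h
    have := hp.one_lt
    omega
  refine ⟨him, eq_of_pow_eq_one_of_map_eq φ h4 hχ4 ?_ ?_⟩
  · rw [← pow_mul, mul_comm, pow_mul, show (-(⟨0, 1⟩ : GaussianInt)) ^ 4 = 1 by decide, one_pow]
  · rw [hφχ, map_pow, map_neg, hφi]
    exact two_pow_eq_neg_pow_of_sq_add_sq hpπ him hre_im hz hπz
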